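/- arXiv:1909.00213 — 4 statements merged into one kernel-verified Lean document; each statement's English description precedes it below -/
import Mathlib

section
/- The map sending an integer n to the sequence (n mod 3, g(n) mod 3, ..., g^(k-1)(n) mod 3) induces a bijection from ℤ/3^kℤ to the set of all 3^k sequences in (ℤ/3ℤ)^k; equivalently, any 3^k consecutive integers realize each residue sequence of length k exactly once. -/
def g (n : ℤ) : ℤ :=
  if n % 3 = 0 then 2 * n / 3
  else if n % 3 = 1 then (4 * n - 1) / 3
  else (4 * n + 1) / 3

lemma g_eq (n : ℤ) :
    (n % 3 = 0 ∧ 3 * g n = 2 * n) ∨ (n % 3 = 1 ∧ 3 * g n = 4 * n - 1) ∨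
    (n % 3 = 2 ∧ 3 * g n = 4 * n + 1) := by
  unfold g; split_ifs <;> omega

lemma g_lin (n m : ℤ) (h : n % 3 = m % 3) :
    ∃ c : ℤ, (c = 2 ∨ c = 4) ∧ 3 * (g n - g m) = c * (n - m) := by
  rcases g_eq n with ⟨h1, h2⟩ | ⟨h1, h2⟩ | ⟨h1, h2⟩ <;>
    rcases g_eq m with ⟨h3, h4⟩ | ⟨h3, h4⟩ | ⟨h3, h4⟩ <;>
    first
      | exact ⟨2, Or.inl rfl, by linarith⟩
      | exact ⟨4, Or.inr rfl, by linarith⟩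
      | omega

lemma step1 (j : ℕ) {n m : ℤ} (h : (3:ℤ)^(j+1) ∣ n - m) : (3:ℤ)^j ∣ g n - g m := by
  have h3 : (3:ℤ) ∣ n - m := dvd_trans (dvd_pow_self 3 (Nat.succ_ne_zero j)) h
  have hmod : n % 3 = m % 3 := Int.ModEq.symm (Int.modEq_iff_dvd.mpr (by omega))
  obtain ⟨c, hc, hlin⟩ := g_lin n m hmod
  obtain ⟨d, hd⟩ := h
  refine ⟨c * d, ?_⟩
  have : (3:ℤ) * (g n - g m) = 3 * (3^j * (c * d)) := by
    rw [hlin, hd, pow_succ]; ring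
  exact mul_left_cancel₀ (by norm_num) this

lemma step2 (j : ℕ) {n m : ℤ} (h3 : (3:ℤ) ∣ n - m) (h : (3:ℤ)^j ∣ g n - g m) :
    (3:ℤ)^(j+1) ∣ n - m := by
  have hmod : n % 3 = m % 3 := Int.ModEq.symm (Int.modEq_iff_dvd.mpr (by omega))
  obtain ⟨c, hc, hlin⟩ := g_lin n m hmod
  obtain ⟨d, hd⟩ := h
  have hdvd : (3:ℤ)^(j+1) ∣ c * (n - m) := ⟨d, by rw [← hlin, hd, pow_succ]; ring⟩
  have hcop : IsCoprime ((3:ℤ)^(j+1)) c := by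
    apply IsCoprime.pow_left
    rcases hc with rfl | rfl <;>
      exact Int.isCoprime_iff_gcd_eq_one.mpr (by norm_num)
  exact hcop.dvd_of_dvd_mul_left hdvd

lemma iterL1 : ∀ (k : ℕ) (n m : ℤ), (3:ℤ)^k ∣ n - m →
    ∀ i < k, (3:ℤ) ∣ g^[i] n - g^[i] m := by
  intro k
  induction k with
  | zero => intro n m _ i hi; omega
  | succ k ih =>
    intro n m h i hi
    match i with
    | 0 =>
      simpa using dvd_trans (dvd_pow_self 3 (Nat.succ_ne_zero k)) h
    | i + 1 =>
      rw [Function.iterate_succ_apply, Function.iterate_succ_apply]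
      exact ih (g n) (g m) (step1 k h) i (by omega)

lemma iterL2 : ∀ (k : ℕ) (n m : ℤ), (∀ i < k, (3:ℤ) ∣ g^[i] n - g^[i] m) →
    (3:ℤ)^k ∣ n - m := by
  intro k
  induction k with
  | zero => intro n m _; simpa using one_dvd _
  | succ k ih =>
    intro n m h
    have h0 : (3:ℤ) ∣ n - m := by simpa using h 0 (Nat.succ_pos k)
    have hg : (3:ℤ)^k ∣ g n - g m := by
      apply ih
      intro i hi
      have := h (i+1) (by omega)
      simpa [Function.iterate_succ_apply] using this
    exact step2 k h0 hg

theorem residue_sequence_bijection (k : ℕ) :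
    ∃ F : ZMod (3^k) ≃ (Fin k → ZMod 3),
      ∀ n : ℤ, ∀ i : Fin k, F ((n : ZMod (3^k))) i = ((g^[(i : ℕ)] n : ℤ) : ZMod 3) := by
  haveI : NeZero (3^k) := ⟨pow_ne_zero k (by norm_num)⟩
  set f : ZMod (3^k) → (Fin k → ZMod 3) :=
    fun x i => ((g^[(i : ℕ)] (x.val : ℤ) : ℤ) : ZMod 3) with hf
  -- key: f agrees with the desired formula on integer casts
  have key : ∀ (n : ℤ) (i : Fin k),
      f ((n : ZMod (3^k))) i = ((g^[(i : ℕ)] n : ℤ) : ZMod 3) := by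
    intro n i
    have hcast : ((((n : ZMod (3^k)).val : ℤ)) : ZMod (3^k)) = (n : ZMod (3^k)) := by
      simp [ZMod.natCast_val, ZMod.intCast_cast, ZMod.intCast_zmod_cast]
    have hmodeq : (((n : ZMod (3^k)).val : ℤ)) ≡ n [ZMOD ((3:ℕ)^k : ℤ)] := by
      rw [Int.ModEq]
      have := (ZMod.intCast_eq_intCast_iff _ _ _).mp hcast
      exact_mod_cast this
    have hdvd : (3:ℤ)^k ∣ (((n : ZMod (3^k)).val : ℤ)) - n := by
      have := Int.ModEq.dvd hmodeq
      have h2 : ((3:ℕ)^k : ℤ) ∣ n - (((n : ZMod (3^k)).val : ℤ)) := this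
      push_cast at h2
      exact (dvd_sub_comm).mp h2
    have h3 : (3:ℤ) ∣ g^[(i:ℕ)] (((n : ZMod (3^k)).val : ℤ)) - g^[(i:ℕ)] n :=
      iterL1 k _ _ hdvd i i.isLt
    rw [hf]
    have : (g^[(i:ℕ)] (((n : ZMod (3^k)).val : ℤ)) : ZMod 3) = (g^[(i:ℕ)] n : ZMod 3) := by
      rw [ZMod.intCast_eq_intCast_iff]
      exact Int.modEq_iff_dvd.mpr (dvd_sub_comm.mp (by exact_mod_cast h3))
    simpa using this
  have hinj : Function.Injective f := by
    intro x y hxy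
    have hdvd : (3:ℤ)^k ∣ (x.val : ℤ) - (y.val : ℤ) := by
      apply iterL2
      intro i hi
      have := congrFun hxy ⟨i, hi⟩
      rw [hf] at this
      simp only at this
      have hmod := (ZMod.intCast_eq_intCast_iff _ _ _).mp this
      have hdd := Int.ModEq.dvd hmod
      exact dvd_sub_comm.mp (by exact_mod_cast hdd)
    have hx : x.val < 3^k := ZMod.val_lt x
    have hy : y.val < 3^k := ZMod.val_lt y
    have hval : x.val = y.val := by
      have hx' : (x.val : ℤ) < (3:ℤ)^k := by exact_mod_cast hx
      have hy' : (y.val : ℤ) < (3:ℤ)^k := by exact_mod_cast hy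
      have hx0 : (0:ℤ) ≤ (x.val : ℤ) := Int.natCast_nonneg _
      have hy0 : (0:ℤ) ≤ (y.val : ℤ) := Int.natCast_nonneg _
      have hz : (x.val : ℤ) - (y.val : ℤ) = 0 := by
        refine Int.eq_zero_of_abs_lt_dvd hdvd ?_
        rw [abs_lt]
        constructor <;> linarith
      have : (x.val : ℤ) = (y.val : ℤ) := by linarith
      exact_mod_cast this
    exact ZMod.val_injective _ hval
  have hcard : Fintype.card (ZMod (3^k)) = Fintype.card (Fin k → ZMod 3) := by
    simp [ZMod.card]
  exact ⟨Equiv.ofBijective f ((Fintype.bijective_iff_injective_and_card f).mpr ⟨hinj, hcard⟩), key⟩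
end

section
/- For the 3x+1 map T (T(n)=n/2 if n even, T(n)=(3n+1)/2 if n odd) and any k ≥ 0, if m ≡ n (mod 2^k) then for all i < k the parities of T^(i)(m) and T^(i)(n) agree. -/
def T (n : ℤ) : ℤ :=
  if n % 2 = 0 then n / 2 else (3 * n + 1) / 2

lemma T_key (j : ℕ) (m n : ℤ) (h : m ≡ n [ZMOD (2:ℤ)^(j+1)]) :
    T m ≡ T n [ZMOD (2:ℤ)^j] := by
  have hd : (2:ℤ)^(j+1) ∣ m - n := Int.ModEq.dvd h.symm
  obtain ⟨c, hc⟩ := hd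
  have hmn2 : m % 2 = n % 2 := by
    have : (2:ℤ) ∣ m - n := ⟨2^j * c, by rw [hc]; ring⟩
    omega
  unfold T
  by_cases hm : m % 2 = 0
  · rw [if_pos hm, if_pos (hmn2 ▸ hm)]
    refine Int.ModEq.symm (Int.modEq_iff_dvd.mpr ⟨c, ?_⟩)
    have hn : n % 2 = 0 := hmn2 ▸ hm
    have h1 : 2 * (m / 2) = m := by omega
    have h2 : 2 * (n / 2) = n := by omega
    set d := (2:ℤ)^j * c with hdd
    have : m - n = 2 * d := by rw [hdd, hc, pow_succ]; ring
    omega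
  · rw [if_neg hm, if_neg (hmn2 ▸ hm)]
    refine Int.ModEq.symm (Int.modEq_iff_dvd.mpr ⟨3 * c, ?_⟩)
    have hn : ¬ n % 2 = 0 := hmn2 ▸ hm
    have h1 : 2 * ((3*m+1) / 2) = 3*m+1 := by omega
    have h2 : 2 * ((3*n+1) / 2) = 3*n+1 := by omega
    set d := (2:ℤ)^j * c with hdd
    have h3 : 2 ^ j * (3 * c) = 3 * d := by rw [hdd]; ring
    have : m - n = 2 * d := by rw [hdd, hc, pow_succ]; ring
    rw [h3]
    omega

lemma iter_key (k : ℕ) (m n : ℤ) (h : m ≡ n [ZMOD (2:ℤ)^k]) :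
    ∀ i, i ≤ k → T^[i] m ≡ T^[i] n [ZMOD (2:ℤ)^(k-i)] := by
  intro i
  induction i with
  | zero => simpa using h
  | succ i ih =>
    intro hik
    have h1 := ih (Nat.le_of_succ_le hik)
    have : k - i = (k - (i+1)) + 1 := by omega
    rw [this] at h1
    have := T_key _ _ _ h1
    simpa [Function.iterate_succ_apply'] using this

theorem parity_sequences_agree (k : ℕ) (m n : ℤ)
    (h : m ≡ n [ZMOD (2 : ℤ)^k]) :
    ∀ i < k, T^[i] m ≡ T^[i] n [ZMOD 2] := by
  intro i hik
  have h1 := iter_key k m n h i (le_of_lt hik)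
  have hd : (2:ℤ) ∣ (2:ℤ)^(k-i) := dvd_pow_self 2 (by omega)
  exact h1.of_dvd hd
end

section
/- For the 3x+1 map T, the map sending n mod 2^k to the parity sequence (T^(0)(n) mod 2, ..., T^(k-1)(n) mod 2) is a bijection from ℤ/2^kℤ to {0,1}^k. -/
lemma T_step {j : ℕ} {n m : ℤ} (h : (2^(j+1) : ℤ) ∣ n - m) :
    (2^j : ℤ) ∣ T n - T m := by
  obtain ⟨c, hc⟩ := h
  have hc' : n - m = 2 * (2^j * c) := by rw [hc]; ring
  have hpar : n % 2 = m % 2 := by omega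
  unfold T
  by_cases hn : n % 2 = 0
  · rw [if_pos hn, if_pos (hpar ▸ hn)]
    exact ⟨c, by omega⟩
  · rw [if_neg hn, if_neg (hpar ▸ hn)]
    refine ⟨3 * c, ?_⟩
    have hlink : (2^j : ℤ) * (3 * c) = 3 * (2^j * c) := by ring
    omega

lemma T_iter {i : ℕ} {j : ℕ} {n m : ℤ} (h : (2^(i+j) : ℤ) ∣ n - m) :
    (2^j : ℤ) ∣ T^[i] n - T^[i] m := by
  induction i generalizing j n m with
  | zero => simpa using h
  | succ i ih =>
    rw [Function.iterate_succ_apply, Function.iterate_succ_apply]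
    exact ih (T_step (by rwa [show i + 1 + j = i + (j + 1) by ring] at h))

lemma T_inj {k : ℕ} {n m : ℤ} (h : ∀ i < k, (2:ℤ) ∣ T^[i] n - T^[i] m) :
    (2^k : ℤ) ∣ n - m := by
  induction k generalizing n m with
  | zero => exact ⟨n - m, by ring⟩
  | succ k ih =>
    have h0 : (2:ℤ) ∣ n - m := by simpa using h 0 (Nat.succ_pos k)
    have hT : (2^k : ℤ) ∣ T n - T m := by
      apply ih
      intro i hi
      have := h (i+1) (by omega)
      simpa [Function.iterate_succ_apply] using this
    have hpar : n % 2 = m % 2 := by omega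
    obtain ⟨d, hd⟩ := hT
    have hlink : (2^(k+1) : ℤ) * d = 2 * (2^k * d) := by ring
    by_cases hn : n % 2 = 0
    · have hTn : T n = n / 2 := by unfold T; rw [if_pos hn]
      have hTm : T m = m / 2 := by unfold T; rw [if_pos (hpar ▸ hn)]
      rw [hTn, hTm] at hd
      exact ⟨d, by omega⟩
    · have hTn : T n = (3*n+1) / 2 := by unfold T; rw [if_neg hn]
      have hTm : T m = (3*m+1) / 2 := by unfold T; rw [if_neg (hpar ▸ hn)]
      rw [hTn, hTm] at hd
      have h3 : (2^(k+1) : ℤ) ∣ 3 * (n - m) := ⟨d, by omega⟩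
      have hcop : IsCoprime (2^(k+1) : ℤ) 3 := by
        apply IsCoprime.pow_left
        exact Int.isCoprime_iff_gcd_eq_one.mpr rfl
      exact hcop.dvd_of_dvd_mul_left h3

theorem parity_sequence_bijection (k : ℕ) :
    ∃ F : ZMod (2^k) ≃ (Fin k → ZMod 2),
      ∀ n : ℤ, ∀ i : Fin k, F ((n : ZMod (2^k))) i = ((T^[(i : ℕ)] n : ℤ) : ZMod 2) := by
  have hNZ : NeZero (2^k) := ⟨by positivity⟩
  set f : ZMod (2^k) → (Fin k → ZMod 2) :=
    fun x i => ((T^[(i : ℕ)] (x.val : ℤ) : ℤ) : ZMod 2) with hf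
  have key : ∀ (n : ℤ) (i : Fin k), f ((n : ZMod (2^k))) i = ((T^[(i : ℕ)] n : ℤ) : ZMod 2) := by
    intro n i
    have hmod : ((((n : ZMod (2^k)).val : ℤ)) : ZMod (2^k)) = (n : ZMod (2^k)) := by
      rw [Int.cast_natCast, ZMod.natCast_val, ZMod.cast_id]
    have hdvd : ((2^k : ℕ) : ℤ) ∣ n - ((n : ZMod (2^k)).val : ℤ) :=
      Int.ModEq.dvd ((ZMod.intCast_eq_intCast_iff _ _ _).mp hmod)
    have hdvd' : (2^((i:ℕ)+1) : ℤ) ∣ ((n : ZMod (2^k)).val : ℤ) - n := by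
      refine dvd_trans (pow_dvd_pow 2 (show (i:ℕ)+1 ≤ k by omega)) ?_
      exact (dvd_sub_comm).mp (by exact_mod_cast hdvd)
    have h2 : (2:ℤ) ∣ T^[(i:ℕ)] ((n : ZMod (2^k)).val : ℤ) - T^[(i:ℕ)] n := by
      have := T_iter (i := (i:ℕ)) (j := 1) (by simpa using hdvd')
      simpa using this
    show ((T^[(i:ℕ)] ((n : ZMod (2^k)).val : ℤ) : ℤ) : ZMod 2) = _
    rw [ZMod.intCast_eq_intCast_iff]
    exact (Int.modEq_iff_dvd.mpr (by exact_mod_cast dvd_sub_comm.mp h2))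
  have hinj : Function.Injective f := by
    intro x y hxy
    have hx : ∀ i < k, (2:ℤ) ∣ T^[i] (x.val : ℤ) - T^[i] (y.val : ℤ) := by
      intro i hi
      have := congrFun hxy ⟨i, hi⟩
      simp only [hf] at this
      rw [ZMod.intCast_eq_intCast_iff] at this
      exact_mod_cast dvd_sub_comm.mp (Int.ModEq.dvd this)
    have hdvd := T_inj hx
    have : ((x.val : ℤ) : ZMod (2^k)) = ((y.val : ℤ) : ZMod (2^k)) := by
      rw [ZMod.intCast_eq_intCast_iff]
      exact Int.modEq_iff_dvd.mpr (by exact_mod_cast dvd_sub_comm.mp hdvd)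
    simpa [ZMod.natCast_val, ZMod.cast_id] using this
  have hcard : Fintype.card (ZMod (2^k)) = Fintype.card (Fin k → ZMod 2) := by
    simp [ZMod.card]
  have hbij : Function.Bijective f :=
    (Fintype.bijective_iff_injective_and_card f).mpr ⟨hinj, hcard⟩
  exact ⟨Equiv.ofBijective f hbij, key⟩
end

section
/- The exponential growth rate of R = 3^k / ((k choose k₂) 2^{k₁}) along sequences with k₁/k → α := ln(3/2)/ln(2), k₂/k → 1−α is positive: (1/k) ln R → ln 3 − α ln 2 + α ln α + (1−α) ln(1−α) > 0 (numerically ≈ 0.0145). -/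
open Filter Real

noncomputable def stirlF (n : ℕ) : ℝ := Real.log n.factorial - n * Real.log n + n

lemma stirlF_div_tendsto : Tendsto (fun n : ℕ => stirlF n / n) atTop (nhds 0) := by
  have hπ : (0:ℝ) < Real.sqrt π := Real.sqrt_pos.mpr Real.pi_pos
  have h1 : Tendsto (fun n : ℕ => Real.log (Stirling.stirlingSeq n)) atTop
      (nhds (Real.log (Real.sqrt π))) :=
    ((Real.continuousAt_log hπ.ne').tendsto).comp Stirling.tendsto_stirlingSeq_sqrt_pi
  have h2 : Tendsto (fun n : ℕ => Real.log (Stirling.stirlingSeq n) / n) atTop (nhds 0) :=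
    h1.div_atTop tendsto_natCast_atTop_atTop
  have hlx : Tendsto (fun x : ℝ => Real.log x / x) atTop (nhds 0) := by
    simpa using Real.tendsto_pow_log_div_mul_add_atTop 1 0 1 one_ne_zero
  have h3 : Tendsto (fun n : ℕ => (1/2) * Real.log (2 * n) / n) atTop (nhds 0) := by
    have h2x : Tendsto (fun x : ℝ => 2 * x) atTop atTop :=
      (tendsto_id.const_mul_atTop (by norm_num))
    have heq : ∀ n : ℕ, (1/2) * Real.log (2 * n) / n = Real.log (2 * (n:ℝ)) / (2 * n) := by
      intro n
      rcases eq_or_ne (n:ℝ) 0 with h | h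
      · simp [h]
      · field_simp
        try ring
    have h3' : Tendsto (fun n : ℕ => Real.log (2*(n:ℝ)) / (2*(n:ℝ))) atTop (nhds 0) := by
      simpa [Function.comp_def] using hlx.comp (h2x.comp tendsto_natCast_atTop_atTop)
    exact h3'.congr fun n => (heq n).symm
  have := h2.add h3
  rw [add_zero] at this
  refine this.congr' ?_
  filter_upwards [eventually_ge_atTop 1] with n hn
  have hn0 : (0:ℝ) < n := by exact_mod_cast hn
  have hform := Stirling.log_stirlingSeq_formula n
  have hlogdiv : Real.log ((n:ℝ) / Real.exp 1) = Real.log n - 1 := by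
    rw [Real.log_div hn0.ne' (Real.exp_ne_zero 1), Real.log_exp]
  rw [hform, hlogdiv, stirlF]
  field_simp
  ring

theorem growth_rate_R (k₁ k₂ : ℕ → ℕ)
    (hk : Tendsto (fun j => k₁ j + k₂ j) atTop atTop)
    (hr : Tendsto (fun j => (k₁ j : ℝ) / ((k₁ j : ℝ) + (k₂ j : ℝ))) atTop
      (nhds (Real.log (3 / 2) / Real.log 2))) :
    let α := Real.log (3 / 2) / Real.log 2
    let L := Real.log 3 - α * Real.log 2 + α * Real.log α + (1 - α) * Real.log (1 - α)
    Tendsto (fun j =>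
        (1 / ((k₁ j : ℝ) + (k₂ j : ℝ))) *
          Real.log ((3 : ℝ) ^ (k₁ j + k₂ j) /
            ((Nat.choose (k₁ j + k₂ j) (k₂ j) : ℝ) * 2 ^ (k₁ j)))) atTop (nhds L)
      ∧ 0 < L := by
  intro α L
  have hαdef : α = Real.log (3/2) / Real.log 2 := rfl
  have hLdef : L = Real.log 3 - α * Real.log 2 + α * Real.log α
      + (1 - α) * Real.log (1 - α) := rfl
  have hlog2 : (0:ℝ) < Real.log 2 := Real.log_pos (by norm_num)
  have hlog32 : (0:ℝ) < Real.log (3/2) := Real.log_pos (by norm_num)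
  have hα0 : 0 < α := div_pos hlog32 hlog2
  have hα1 : α < 1 := by
    rw [hαdef, div_lt_one hlog2]
    exact Real.log_lt_log (by norm_num) (by norm_num)
  have hβ0 : 0 < 1 - α := by linarith
  -- abbreviations
  set a : ℕ → ℝ := fun j => (k₁ j : ℝ) / ((k₁ j : ℝ) + (k₂ j : ℝ)) with hadef
  set b : ℕ → ℝ := fun j => (k₂ j : ℝ) / ((k₁ j : ℝ) + (k₂ j : ℝ)) with hbdef
  have hK : Tendsto (fun j => ((k₁ j : ℝ) + (k₂ j : ℝ))) atTop atTop := by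
    have := tendsto_natCast_atTop_atTop (R := ℝ) |>.comp hk
    apply this.congr
    intro j
    simp [Function.comp]
  have hKpos : ∀ᶠ j in atTop, (0:ℝ) < (k₁ j : ℝ) + (k₂ j : ℝ) := hK.eventually_gt_atTop 0
  have hb : Tendsto b atTop (nhds (1 - α)) := by
    have h1 : Tendsto (fun j => 1 - a j) atTop (nhds (1 - α)) := tendsto_const_nhds.sub hr
    refine h1.congr' ?_
    filter_upwards [hKpos] with j hj
    rw [hadef, hbdef]
    field_simp
    try ring
  have hk1 : Tendsto k₁ atTop atTop := by
    rw [← tendsto_natCast_atTop_iff (R := ℝ)]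
    have h := hr.pos_mul_atTop hα0 hK
    refine h.congr' ?_
    filter_upwards [hKpos] with j hj
    rw [hadef]
    field_simp
  have hk2 : Tendsto k₂ atTop atTop := by
    rw [← tendsto_natCast_atTop_iff (R := ℝ)]
    have h := hb.pos_mul_atTop hβ0 hK
    refine h.congr' ?_
    filter_upwards [hKpos] with j hj
    rw [hbdef]
    field_simp
  -- component limits
  have hA : Tendsto (fun j => a j * Real.log (a j)) atTop (nhds (α * Real.log α)) :=
    hr.mul (((Real.continuousAt_log hα0.ne').tendsto).comp hr)
  have hB : Tendsto (fun j => b j * Real.log (b j)) atTop (nhds ((1-α) * Real.log (1-α))) :=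
    hb.mul (((Real.continuousAt_log hβ0.ne').tendsto).comp hb)
  have hF : Tendsto (fun j => stirlF (k₁ j + k₂ j) / ((k₁ j : ℝ) + (k₂ j : ℝ)))
      atTop (nhds 0) := by
    have := stirlF_div_tendsto.comp hk
    apply this.congr
    intro j
    simp [Function.comp]
  have hF1 : Tendsto (fun j => stirlF (k₁ j) / (k₁ j : ℝ)) atTop (nhds 0) := by
    simpa [Function.comp_def] using stirlF_div_tendsto.comp hk1
  have hF2 : Tendsto (fun j => stirlF (k₂ j) / (k₂ j : ℝ)) atTop (nhds 0) := by
    simpa [Function.comp_def] using stirlF_div_tendsto.comp hk2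
  have hmain : Tendsto (fun j =>
      Real.log 3 - a j * Real.log 2 + a j * Real.log (a j) + b j * Real.log (b j)
      + (-(stirlF (k₁ j + k₂ j) / ((k₁ j : ℝ) + (k₂ j : ℝ)))
         + (stirlF (k₁ j) / (k₁ j : ℝ)) * a j
         + (stirlF (k₂ j) / (k₂ j : ℝ)) * b j)) atTop (nhds L) := by
    have T : Tendsto (fun j =>
        Real.log 3 - a j * Real.log 2 + a j * Real.log (a j) + b j * Real.log (b j)
        + (-(stirlF (k₁ j + k₂ j) / ((k₁ j : ℝ) + (k₂ j : ℝ)))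
           + (stirlF (k₁ j) / (k₁ j : ℝ)) * a j
           + (stirlF (k₂ j) / (k₂ j : ℝ)) * b j)) atTop
        (nhds (Real.log 3 - α * Real.log 2 + α * Real.log α + (1-α) * Real.log (1-α)
          + (-0 + 0 * α + 0 * (1-α)))) :=
      ((((tendsto_const_nhds (x := Real.log 3)).sub (hr.mul_const (Real.log 2))).add hA).add
        hB).add ((hF.neg.add (hF1.mul hr)).add (hF2.mul hb))
    convert T using 2
    rw [hLdef]
    ring
  constructor
  · refine hmain.congr' ?_
    filter_upwards [hk1.eventually_ge_atTop 1, hk2.eventually_ge_atTop 1] with j h1 h2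
    have hK1 : (1:ℝ) ≤ (k₁ j : ℝ) := by exact_mod_cast h1
    have hK2 : (1:ℝ) ≤ (k₂ j : ℝ) := by exact_mod_cast h2
    have hK1' : (0:ℝ) < (k₁ j : ℝ) := by linarith
    have hK2' : (0:ℝ) < (k₂ j : ℝ) := by linarith
    have hKp : (0:ℝ) < (k₁ j : ℝ) + (k₂ j : ℝ) := by linarith
    have hCpos : (0:ℝ) < (Nat.choose (k₁ j + k₂ j) (k₂ j) : ℝ) := by
      exact_mod_cast Nat.choose_pos (Nat.le_add_left _ _)
    have hfactpos : ∀ n : ℕ, (0:ℝ) < (Nat.factorial n : ℝ) := fun n => by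
      exact_mod_cast Nat.factorial_pos n
    have hchoose : (Nat.choose (k₁ j + k₂ j) (k₂ j) : ℝ)
        = (Nat.factorial (k₁ j + k₂ j) : ℝ)
          / ((Nat.factorial (k₁ j) : ℝ) * (Nat.factorial (k₂ j) : ℝ)) := by
      rw [eq_div_iff (by positivity)]
      have := Nat.choose_mul_factorial_mul_factorial (Nat.le_add_left (k₂ j) (k₁ j))
      rw [Nat.add_sub_cancel] at this
      push_cast [← this]
      ring
    have hlogC : Real.log (Nat.choose (k₁ j + k₂ j) (k₂ j) : ℝ)
        = Real.log (Nat.factorial (k₁ j + k₂ j) : ℝ)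
          - Real.log (Nat.factorial (k₁ j) : ℝ) - Real.log (Nat.factorial (k₂ j) : ℝ) := by
      rw [hchoose, Real.log_div (by positivity) (by positivity),
        Real.log_mul (hfactpos _).ne' (hfactpos _).ne']
      ring
    have hlogfact : ∀ n : ℕ, Real.log (Nat.factorial n : ℝ)
        = stirlF n + n * Real.log n - n := by
      intro n; rw [stirlF]; ring
    have hloga : Real.log (a j) = Real.log (k₁ j : ℝ) - Real.log ((k₁ j : ℝ) + (k₂ j : ℝ)) := by
      rw [hadef]
      exact Real.log_div hK1'.ne' hKp.ne'
    have hlogb : Real.log (b j) = Real.log (k₂ j : ℝ) - Real.log ((k₁ j : ℝ) + (k₂ j : ℝ)) := by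
      rw [hbdef]
      exact Real.log_div hK2'.ne' hKp.ne'
    have hsplit : Real.log ((3:ℝ) ^ (k₁ j + k₂ j)
          / ((Nat.choose (k₁ j + k₂ j) (k₂ j) : ℝ) * 2 ^ (k₁ j)))
        = ((k₁ j + k₂ j : ℕ) : ℝ) * Real.log 3
          - (Real.log (Nat.choose (k₁ j + k₂ j) (k₂ j) : ℝ) + (k₁ j : ℝ) * Real.log 2) := by
      rw [Real.log_div (by positivity) (by positivity),
        Real.log_mul hCpos.ne' (by positivity), Real.log_pow, Real.log_pow]
    rw [hsplit, hlogC, hlogfact, hlogfact, hlogfact, hloga, hlogb, hadef, hbdef]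
    push_cast
    field_simp
    ring
  · -- positivity of L
    have hα2 : α * Real.log 2 = Real.log (3/2) := by
      rw [hαdef]; field_simp
    have hlog32' : Real.log (3/2) = Real.log 3 - Real.log 2 :=
      Real.log_div (by norm_num) (by norm_num)
    have hbin : L = Real.log 2 - Real.binEntropy α := by
      rw [hLdef, Real.binEntropy, Real.log_inv, Real.log_inv, hα2, hlog32']
      ring
    have hne : α ≠ 2⁻¹ := by
      intro h
      have h9 : Real.log ((9:ℝ)/4) = Real.log 2 := by
        have : (9:ℝ)/4 = (3/2)^2 := by norm_num
        rw [this, Real.log_pow]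
        have := h
        rw [hαdef, div_eq_iff hlog2.ne'] at this
        rw [this]
        push_cast
        ring
      have := Real.log_injOn_pos (by norm_num : (9:ℝ)/4 ∈ Set.Ioi 0)
        (by norm_num : (2:ℝ) ∈ Set.Ioi 0) h9
      norm_num at this
    rw [hbin, sub_pos]
    exact Real.binEntropy_lt_log_two.mpr hne
end
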